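/- arXiv:1212.1932 — 2 statements merged into one kernel-verified Lean document; each statement's English description precedes it below -/
import Mathlib

section
/- Let K be a compact metric space, let n, m ≥ 1, and let G : ℝⁿ × K → ℝᵐ be continuous, differentiable in its first argument at every point, with the partial derivative ∂₁G : ℝⁿ × K → L(ℝⁿ, ℝᵐ) jointly continuous. Consider the Nemytsky (substitution) operator 𝒩 : C(K, ℝⁿ) → C(K, ℝᵐ) defined by 𝒩(μ)(x) = G(μ(x), x), where the spaces of continuous functions carry the supremum norm. Then 𝒩 is continuously Fréchet differentiable, and its Fréchet derivative at μ ∈ C(K, ℝⁿ) is the bounded linear operator sending h ∈ C(K, ℝⁿ) to the function x ↦ ∂₁G(μ(x), x)·h(x). -/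
/-!
The candidate derivative at `μ` is pointwise application of `x ↦ DG (μ x, x)`. Since `DG` is
continuous and `K` compact, the substitution `μ ↦ DG (μ ·, ·)` is continuous for the sup norm,
and pointwise application is a bounded bilinear operation; this gives continuity of the
derivative. The same continuity at `μ` makes `‖DG (μ x + t h x, x) - DG (μ x, x)‖` uniformly small
in `x` and `t ∈ [0, 1]` once `‖h‖` is small, so the mean value inequality on each segment
`[μ x, μ x + h x]` bounds the remainder by `o(‖h‖)` uniformly in `x`.
-/

namespace ContinuousMap

section PointwiseApply

variable {𝕜 K E F : Type*} [NontriviallyNormedField 𝕜] [TopologicalSpace K] [CompactSpace K]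
  [NormedAddCommGroup E] [NormedSpace 𝕜 E] [NormedAddCommGroup F] [NormedSpace 𝕜 F]

noncomputable def pointwiseApply : C(K, E →L[𝕜] F) →L[𝕜] C(K, E) →L[𝕜] C(K, F) :=
  LinearMap.mkContinuous₂
    (LinearMap.mk₂ 𝕜
      (fun (A : C(K, E →L[𝕜] F)) (h : C(K, E)) => (⟨fun x => A x (h x), by fun_prop⟩ : C(K, F)))
      (fun _ _ _ => by ext; simp) (fun _ _ _ => by ext; simp)
      (fun _ _ _ => by ext; simp) (fun _ _ _ => by ext; simp))
    1 fun A h => by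
      rw [one_mul]
      refine (norm_le _ (by positivity)).2 fun x => ?_
      calc ‖A x (h x)‖ ≤ ‖A x‖ * ‖h x‖ := (A x).le_opNorm (h x)
        _ ≤ ‖A‖ * ‖h‖ := by gcongr <;> exact norm_coe_le_norm _ x

@[simp]
theorem pointwiseApply_apply (A : C(K, E →L[𝕜] F)) (h : C(K, E)) (x : K) :
    pointwiseApply A h x = A x (h x) :=
  rfl

end PointwiseApply

section Nemytsky

variable {K X Z : Type*} [TopologicalSpace K] [TopologicalSpace X] [TopologicalSpace Z]

def nemytsky (g : C(X × K, Z)) (μ : C(K, X)) : C(K, Z) :=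
  ⟨fun x => g (μ x, x), by fun_prop⟩

@[simp]
theorem nemytsky_apply (g : C(X × K, Z)) (μ : C(K, X)) (x : K) : nemytsky g μ x = g (μ x, x) :=
  rfl

variable {E F : Type*} [CompactSpace K] [NormedAddCommGroup E]

theorem continuous_nemytsky (g : C(E × K, Z)) : Continuous (nemytsky g) :=
  continuous_of_continuous_uncurry _ <| by
    show Continuous fun p : C(K, E) × K => g (p.1 p.2, p.2)
    fun_prop

variable [NormedSpace ℝ E] [NormedAddCommGroup F] [NormedSpace ℝ F]

theorem hasFDerivAt_nemytsky {G : E × K → F} {DG : C(E × K, E →L[ℝ] F)}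
    (hDeriv : ∀ y x, HasFDerivAt (fun z => G (z, x)) (DG (y, x)) y)
    {N : C(K, E) → C(K, F)} (hN : ∀ μ x, N μ x = G (μ x, x)) (μ : C(K, E)) :
    HasFDerivAt N (pointwiseApply (nemytsky DG μ)) μ := by
  rw [hasFDerivAt_iff_isLittleO_nhds_zero, Asymptotics.isLittleO_iff]
  intro c hc
  -- `f` is pinned because `continuous_nemytsky` is stated for the compact-open topology,
  -- which is only definitionally the metric one.
  obtain ⟨δ, hδ, hclose⟩ :=
    (Metric.continuous_iff (f := nemytsky (K := K) DG)).1 (continuous_nemytsky DG) μ c hc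
  filter_upwards [Metric.ball_mem_nhds 0 hδ] with h hh
  refine (norm_le _ (by positivity)).2 fun x => ?_
  have hsegment : ∀ z ∈ segment ℝ (μ x) (μ x + h x), ‖DG (z, x) - DG (μ x, x)‖ ≤ c := by
    rw [segment_eq_image']
    rintro _ ⟨t, ht, rfl⟩
    have hnear : dist (μ + t • h) μ < δ := by
      rw [dist_eq_norm, add_sub_cancel_left, norm_smul, Real.norm_of_nonneg ht.1]
      exact (mul_le_of_le_one_left (norm_nonneg h) ht.2).trans_lt (mem_ball_zero_iff.1 hh)
    calc ‖DG (μ x + t • (μ x + h x - μ x), x) - DG (μ x, x)‖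
        = ‖(nemytsky DG (μ + t • h) - nemytsky DG μ) x‖ := by simp
      _ ≤ dist (nemytsky DG (μ + t • h)) (nemytsky DG μ) := by
        rw [dist_eq_norm (nemytsky DG _)]; exact norm_coe_le_norm _ x
      _ ≤ c := (hclose _ hnear).le
  have hmean := (convex_segment _ _).norm_image_sub_le_of_norm_hasFDerivWithin_le'
    (fun z _ => (hDeriv z x).hasFDerivWithinAt) hsegment (left_mem_segment ℝ _ _)
    (right_mem_segment ℝ _ _)
  simp only [add_sub_cancel_left] at hmean
  simpa [hN] using hmean.trans (by gcongr; exact norm_coe_le_norm h x)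

end Nemytsky

end ContinuousMap

theorem nemytsky_operator_C1_general
    (n m : ℕ)
    {K : Type*} [MetricSpace K] [CompactSpace K]
    (G : EuclideanSpace ℝ (Fin n) × K → EuclideanSpace ℝ (Fin m))
    (DG : EuclideanSpace ℝ (Fin n) × K →
      (EuclideanSpace ℝ (Fin n) →L[ℝ] EuclideanSpace ℝ (Fin m)))
    (hDG : Continuous DG)
    (hDeriv : ∀ (y : EuclideanSpace ℝ (Fin n)) (x : K),
      HasFDerivAt (fun z => G (z, x)) (DG (y, x)) y)
    (N : C(K, EuclideanSpace ℝ (Fin n)) → C(K, EuclideanSpace ℝ (Fin m)))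
    (hN : ∀ μ x, N μ x = G (μ x, x)) :
    ∃ N' : C(K, EuclideanSpace ℝ (Fin n)) →
        (C(K, EuclideanSpace ℝ (Fin n)) →L[ℝ] C(K, EuclideanSpace ℝ (Fin m))),
      Continuous N' ∧
      (∀ μ, HasFDerivAt N (N' μ) μ) ∧
      (∀ μ h x, N' μ h x = DG (μ x, x) (h x)) := by
  let DGc : C(EuclideanSpace ℝ (Fin n) × K, _) := ⟨DG, hDG⟩
  exact ⟨fun μ => ContinuousMap.pointwiseApply (ContinuousMap.nemytsky DGc μ),
    ContinuousMap.pointwiseApply.continuous.comp (ContinuousMap.continuous_nemytsky DGc),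
    ContinuousMap.hasFDerivAt_nemytsky hDeriv hN, fun _ _ _ => rfl⟩

/-- **C¹-smoothness of the Nemytsky (substitution) operator.**
If `G : ℝⁿ × K → ℝᵐ` is continuous, differentiable in its first argument with jointly
continuous partial derivative `DG`, then the substitution operator
`𝒩(μ)(x) = G(μ(x), x)` on the Banach space `C(K, ℝⁿ)` (sup norm, `K` compact metric)
is continuously Fréchet differentiable, with derivative at `μ` the bounded linear
operator `h ↦ (x ↦ DG(μ(x), x)·h(x))`. -/
theorem nemytsky_operator_C1
    (n m : ℕ) (hn : 1 ≤ n) (hm : 1 ≤ m)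
    {K : Type*} [MetricSpace K] [CompactSpace K]
    (G : EuclideanSpace ℝ (Fin n) × K → EuclideanSpace ℝ (Fin m))
    (DG : EuclideanSpace ℝ (Fin n) × K →
      (EuclideanSpace ℝ (Fin n) →L[ℝ] EuclideanSpace ℝ (Fin m)))
    (hG : Continuous G) (hDG : Continuous DG)
    (hDeriv : ∀ (y : EuclideanSpace ℝ (Fin n)) (x : K),
      HasFDerivAt (fun z => G (z, x)) (DG (y, x)) y)
    (N : C(K, EuclideanSpace ℝ (Fin n)) → C(K, EuclideanSpace ℝ (Fin m)))
    (hN : ∀ μ x, N μ x = G (μ x, x)) :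
    ∃ N' : C(K, EuclideanSpace ℝ (Fin n)) →
        (C(K, EuclideanSpace ℝ (Fin n)) →L[ℝ] C(K, EuclideanSpace ℝ (Fin m))),
      Continuous N' ∧
      (∀ μ, HasFDerivAt N (N' μ) μ) ∧
      (∀ μ h x, N' μ h x = DG (μ x, x) (h x)) :=
  nemytsky_operator_C1_general n m G DG hDG hDeriv N hN
end

section
/- Let C be a nonempty finite type (the set of symbols), let λ ∈ [0, 1), and for each pair (c, c′) ∈ C × C let f_{cc′} : ℝ × ℝ → ℝ and g_{cc′} : ℝ × ℝ → ℝ be bounded functions such that the map (u, w) ↦ (f_{cc′}(u, w), g_{cc′}(u, w)) from ℝ² to ℝ² is Lipschitz with constant λ when ℝ² is equipped with the maximum metric. Then for every sequence of symbols ξ : ℤ → C there exists a unique bounded sequence {(u_i, w_i)}_{i ∈ ℤ} of points of ℝ² satisfying the cross-form relations u_i = f_{ξ_{i−1}ξ_i}(u_{i−1}, w_i) and w_i = g_{ξ_iξ_{i+1}}(u_i, w_{i+1}) for all i ∈ ℤ. -/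
open BoundedContinuousFunction

/-!
With `Φ i = (f, g)_{ξ i, ξ (i+1)}` the cross-form relations say
`(u_{i+1}, w_i) = Φ i (u_i, w_{i+1})`: the orbit is a fixed point of the operator recomputing each `u_i` from its left neighbour and each
`w_i` from its right one. Since every `Φ i` is `λ`-Lipschitz for the max metric, this operator is a
`λ`-contraction of the complete space of bounded sequences with the sup distance (finitely many
bounded maps keep its values bounded), and the Banach fixed-point theorem applies.
-/

theorem existsUnique_bounded_fixedPoint_of_contracting {ι X : Type*} [NormedAddCommGroup X]
    [CompleteSpace X] {K : NNReal} (hK : K < 1) {T : (ι → X) → ι → X} {M : ℝ}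
    (hbdd : ∀ x i, ‖T x i‖ ≤ M)
    (hcontr : ∀ x y d, (∀ j, dist (x j) (y j) ≤ d) → ∀ i, dist (T x i) (T y i) ≤ K * d) :
    ∃! x : ι → X, (∃ M, ∀ i, ‖x i‖ ≤ M) ∧ T x = x := by
  let _ : TopologicalSpace ι := ⊥
  have _ : DiscreteTopology ι := ⟨rfl⟩
  let S : (ι →ᵇ X) → ι →ᵇ X := fun x =>
    .ofNormedAddCommGroup (T x) continuous_of_discreteTopology M (hbdd x)
  have hS : ContractingWith K S := ⟨hK, .of_dist_le_mul fun x y =>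
    (dist_le (by positivity)).2 (hcontr x y _ (dist_coe_le_dist ·))⟩
  refine ⟨hS.fixedPoint,
    ⟨⟨_, norm_coe_le_norm _⟩, congrArg DFunLike.coe hS.fixedPoint_isFixedPt⟩, ?_⟩
  rintro x ⟨⟨N, hN⟩, hx⟩
  let xb : ι →ᵇ X := .ofNormedAddCommGroup x continuous_of_discreteTopology N hN
  exact congrArg DFunLike.coe (hS.fixedPoint_unique (x := xb) (DFunLike.ext' hx))

namespace CrossForm

variable {E F : Type*}

/-- `Φ i` maps `(u_i, w_{i+1})` to `(u_{i+1}, w_i)`. -/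
def step (Φ : ℤ → E × F → E × F) (x : ℤ → E × F) (i : ℤ) : E × F :=
  ((Φ (i - 1) ((x (i - 1)).1, (x i).2)).1, (Φ i ((x i).1, (x (i + 1)).2)).2)

theorem step_eq_self_iff {Φ : ℤ → E × F → E × F} {x : ℤ → E × F} :
    step Φ x = x ↔ ∀ i, (x i).1 = (Φ (i - 1) ((x (i - 1)).1, (x i).2)).1 ∧
      (x i).2 = (Φ i ((x i).1, (x (i + 1)).2)).2 := by
  simp only [funext_iff, step, Prod.ext_iff, eq_comm]

section Normed

variable [NormedAddCommGroup E] [NormedAddCommGroup F]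

theorem norm_step_le {Φ : ℤ → E × F → E × F} {M : ℝ} (hΦ : ∀ i p, ‖Φ i p‖ ≤ M)
    (x : ℤ → E × F) (i : ℤ) : ‖step Φ x i‖ ≤ M := by
  rw [step, Prod.norm_mk]
  exact max_le ((norm_fst_le _).trans (hΦ _ _)) ((norm_snd_le _).trans (hΦ _ _))

theorem dist_step_le {Φ : ℤ → E × F → E × F} {K : NNReal} (hΦ : ∀ i, LipschitzWith K (Φ i))
    {x y : ℤ → E × F} {d : ℝ} (hxy : ∀ j, dist (x j) (y j) ≤ d) (i : ℤ) :
    dist (step Φ x i) (step Φ y i) ≤ K * d := by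
  have fst_le (p q : E × F) : dist p.1 q.1 ≤ dist p q :=
    (le_max_left _ _).trans_eq Prod.dist_eq.symm
  have snd_le (p q : E × F) : dist p.2 q.2 ≤ dist p q :=
    (le_max_right _ _).trans_eq Prod.dist_eq.symm
  have image_le (j k : ℤ) : dist (Φ j ((x j).1, (x k).2)) (Φ j ((y j).1, (y k).2)) ≤ K * d := by
    refine ((hΦ j).dist_le_mul _ _).trans (mul_le_mul_of_nonneg_left ?_ K.coe_nonneg)
    exact Prod.dist_eq.trans_le
      (max_le ((fst_le (x j) (y j)).trans (hxy j)) ((snd_le (x k) (y k)).trans (hxy k)))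
  rw [Prod.dist_eq]
  dsimp only [step]
  exact max_le ((fst_le _ _).trans (image_le (i - 1) i)) ((snd_le _ _).trans (image_le i (i + 1)))

theorem existsUnique_bounded_step_eq_self [CompleteSpace E] [CompleteSpace F]
    {Φ : ℤ → E × F → E × F} {K : NNReal} (hK : K < 1) (hΦ : ∀ i, LipschitzWith K (Φ i))
    {M : ℝ} (hΦM : ∀ i p, ‖Φ i p‖ ≤ M) :
    ∃! x : ℤ → E × F, (∃ M, ∀ i, ‖x i‖ ≤ M) ∧ step Φ x = x :=
  existsUnique_bounded_fixedPoint_of_contracting hK (norm_step_le hΦM)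
    fun _ _ _ hxy => dist_step_le hΦ hxy

end Normed

end CrossForm

theorem cross_form_unique_bounded_orbit_general
    (C : Type*) [Finite C]
    (lam : NNReal) (hlam : lam < 1)
    (f g : C → C → ℝ → ℝ → ℝ)
    (hbdd : ∀ c c' : C, ∃ M : ℝ, ∀ u w : ℝ, |f c c' u w| ≤ M ∧ |g c c' u w| ≤ M)
    (hlip : ∀ c c' : C,
      LipschitzWith lam (fun p : ℝ × ℝ => ((f c c' p.1 p.2, g c c' p.1 p.2) : ℝ × ℝ)))
    (ξ : ℤ → C) :
    ∃! x : ℤ → ℝ × ℝ,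
      (∃ M : ℝ, ∀ i : ℤ, ‖x i‖ ≤ M) ∧
      ∀ i : ℤ,
        (x i).1 = f (ξ (i - 1)) (ξ i) (x (i - 1)).1 (x i).2 ∧
        (x i).2 = g (ξ i) (ξ (i + 1)) (x i).1 (x (i + 1)).2 := by
  choose M hM using hbdd
  obtain ⟨M₀, hM₀⟩ := Finite.bddAbove_range fun p : C × C => M p.1 p.2
  let Φ : ℤ → ℝ × ℝ → ℝ × ℝ := fun i p =>
    (f (ξ i) (ξ (i + 1)) p.1 p.2, g (ξ i) (ξ (i + 1)) p.1 p.2)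
  have hΦM : ∀ i p, ‖Φ i p‖ ≤ M₀ := fun i p => by
    have hle : M (ξ i) (ξ (i + 1)) ≤ M₀ := hM₀ ⟨(ξ i, ξ (i + 1)), rfl⟩
    obtain ⟨hf, hg⟩ := hM (ξ i) (ξ (i + 1)) p.1 p.2
    exact (Prod.norm_mk _ _).trans_le (max_le (hf.trans hle) (hg.trans hle))
  simpa only [CrossForm.step_eq_self_iff, Φ, sub_add_cancel] using
    CrossForm.existsUnique_bounded_step_eq_self hlam (fun i => hlip _ _) hΦM

/-- **Existence and uniqueness of the orbit with a prescribed code.** Given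
cross-form maps `(f_{cc′}, g_{cc′}) : ℝ² → ℝ²` (max metric), bounded and Lipschitz
with constant `λ < 1`, every code `ξ : ℤ → C` determines a unique bounded sequence
`{(u_i, w_i)}_{i∈ℤ}` in `ℝ²` satisfying the cross-form relations
`u_i = f_{ξ_{i−1}ξ_i}(u_{i−1}, w_i)` and `w_i = g_{ξ_iξ_{i+1}}(u_i, w_{i+1})`.
(The norm on `ℝ × ℝ` is the maximum norm.) -/
theorem cross_form_unique_bounded_orbit
    (C : Type*) [Finite C] [Nonempty C]
    (lam : NNReal) (hlam : lam < 1)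
    (f g : C → C → ℝ → ℝ → ℝ)
    (hbdd : ∀ c c' : C, ∃ M : ℝ, ∀ u w : ℝ, |f c c' u w| ≤ M ∧ |g c c' u w| ≤ M)
    (hlip : ∀ c c' : C,
      LipschitzWith lam (fun p : ℝ × ℝ => ((f c c' p.1 p.2, g c c' p.1 p.2) : ℝ × ℝ)))
    (ξ : ℤ → C) :
    ∃! x : ℤ → ℝ × ℝ,
      (∃ M : ℝ, ∀ i : ℤ, ‖x i‖ ≤ M) ∧
      ∀ i : ℤ,
        (x i).1 = f (ξ (i - 1)) (ξ i) (x (i - 1)).1 (x i).2 ∧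
        (x i).2 = g (ξ i) (ξ (i + 1)) (x i).1 (x (i + 1)).2 :=
  cross_form_unique_bounded_orbit_general C lam hlam f g hbdd hlip ξ
end
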